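/- arXiv:1601.01508 — 7 statements merged into one kernel-verified Lean document; each statement's English description precedes it below -/
import Mathlib

section
/- Let k be a field of characteristic zero, let f_1,…,f_m ∈ k[x_1,…,x_n] be polynomials with 1 ≤ m ≤ n, and let g ∈ k[x_1,…,x_n] be an irreducible polynomial. If there exists an irreducible polynomial w ∈ k[x_1,…,x_m] such that g² divides w(f_1,…,f_m), then g divides dgcd(f_1,…,f_m). -/
/-!
For `q` with `g ∣ q(f)` write `q(f) = g c`. The chain rule gives
`∑ₜ (∂ₜq)(f) ∂ⱼfₜ = c ∂ⱼg + g ∂ⱼc`, so modulo `g` the vector `((∂ₜq)(f))ₜ` is a left null vector of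
the Jacobian matrix `(∂ⱼfₜ)` when `g ∣ c`, and for two such `p, r` so is
`c_r (∂ₜp)(f) - c_p (∂ₜr)(f)`. A null vector that is nonzero modulo the prime `g` makes `g` divide
every maximal minor, hence `dgcd(f)`.

To make it nonzero: descending through partial derivatives (in characteristic zero a nonconstant
polynomial has a nonzero one) gives `p` with `g ∣ p(f)` but `g ∤ (∂ₜp)(f)` for some `t`. If
`g² ∤ p(f)` then `w ∤ p`, and eliminating the `t`-th variable between the irreducible `w` and `p`
by a resultant gives a nonzero `r₀` free of it with `g ∣ r₀(f)`; descending from `r₀` among the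
polynomials free of the `t`-th variable gives `r` with `g ∤ (∂ₛr)(f)` for some `s`. Then either
`g² ∣ r(f)`, or the `t`-th entry `c_r (∂ₜp)(f)` of the combination is nonzero modulo `g`.
-/

open MvPolynomial

/-- The Jacobian determinant of `f₁, …, f_m` with respect to the variables
`x_{i 1}, …, x_{i m}`. -/
noncomputable def jacDet {k : Type*} [Field k] {m n : ℕ}
    (f : Fin m → MvPolynomial (Fin n) k) (i : Fin m → Fin n) : MvPolynomial (Fin n) k :=
  Matrix.det (Matrix.of fun j l => pderiv (i l) (f j))

/-- `d` is a greatest common divisor (in the UFD `k[x₁,…,xₙ]`) of all Jacobian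
determinants `jac^{f₁,…,f_m}_{x_{i₁},…,x_{i_m}}`, `1 ≤ i₁ < … < i_m ≤ n`;
strictly increasing sequences `i₁ < … < i_m` are encoded as strictly monotone
maps `Fin m → Fin n`.  (Note that this forces `d = 0` when all the Jacobian
determinants vanish.) -/
def IsDgcd {k : Type*} [Field k] {m n : ℕ}
    (f : Fin m → MvPolynomial (Fin n) k) (d : MvPolynomial (Fin n) k) : Prop :=
  (∀ i : Fin m → Fin n, StrictMono i → d ∣ jacDet f i) ∧
  ∀ e : MvPolynomial (Fin n) k, (∀ i : Fin m → Fin n, StrictMono i → e ∣ jacDet f i) → e ∣ d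

namespace Polynomial

theorem exists_mul_add_mul_eq_C_of_not_dvd {R : Type*} [CommRing R] [IsDomain R] [IsGCDMonoid R]
    {a b : R[X]} (ha : Irreducible a) (ha0 : a.natDegree ≠ 0) (hab : ¬ a ∣ b) :
    ∃ p q : R[X], ∃ c ≠ 0, a * p + b * q = C c := by
  let K := FractionRing R
  have hinj : Function.Injective (algebraMap R K) := IsFractionRing.injective R K
  have hprim := ha.isPrimitive ha0
  have hcop : IsCoprime (a.map (algebraMap R K)) (b.map (algebraMap R K)) :=
    (hprim.irreducible_iff_irreducible_map_fraction_map.mp ha).coprime_iff_not_dvd.mpr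
      (mt (hprim.dvd_iff_fraction_map_dvd_fraction_map K).mpr hab)
  have hres := resultant_ne_zero _ _ hcop
  rw [natDegree_map_eq_of_injective hinj, natDegree_map_eq_of_injective hinj, resultant_map_map,
    map_ne_zero_iff _ hinj] at hres
  obtain ⟨p, q, -, -, h⟩ := exists_mul_add_mul_eq_C_resultant a b le_rfl le_rfl (Or.inl ha0)
  exact ⟨p, q, _, hres, h⟩

end Polynomial

namespace MvPolynomial

variable {σ R : Type*}

theorem pderiv_aeval [CommSemiring R] {τ : Type*} [Fintype σ] (f : σ → MvPolynomial τ R)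
    (q : MvPolynomial σ R) (j : τ) :
    pderiv j (aeval f q) = ∑ t, aeval f (pderiv t q) * pderiv j (f t) := by
  classical
  induction q using MvPolynomial.induction_on with
  | C a => simp
  | add p q hp hq => simp only [map_add, hp, hq, add_mul, Finset.sum_add_distrib]
  | mul_X p s hp =>
    simp only [pderiv_mul, map_mul, map_add, aeval_X, pderiv_X, hp, add_mul,
      Finset.sum_add_distrib, Finset.sum_mul]
    simp [Pi.single_apply, mul_right_comm, add_comm]

theorem pderiv_comm [CommRing R] (i j : σ) (p : MvPolynomial σ R) :
    pderiv i (pderiv j p) = pderiv j (pderiv i p) := by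
  classical
  have h : ⁅pderiv i, pderiv j⁆ = (0 : Derivation R (MvPolynomial σ R) (MvPolynomial σ R)) :=
    derivation_ext fun l => by
      rw [Derivation.commutator_apply]
      simp [pderiv_X, Pi.single_apply, apply_ite]
  rw [← sub_eq_zero, ← Derivation.commutator_apply, h, Derivation.zero_apply]

theorem totalDegree_pderiv_lt [CommSemiring R] {i : σ} {p : MvPolynomial σ R}
    (h : pderiv i p ≠ 0) : (pderiv i p).totalDegree < p.totalDegree := by
  classical
  have key : ∀ m ∈ (pderiv i p).support, (m.sum fun _ e => e) < p.totalDegree := by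
    intro m hm
    rw [mem_support_iff, coeff_pderiv] at hm
    have := le_totalDegree (mem_support_iff.mpr (left_ne_zero_of_mul hm))
    rwa [Finsupp.sum_add_index' (fun _ => rfl) (fun _ _ _ => rfl), Finsupp.sum_single_index rfl,
      Nat.add_one_le_iff] at this
  obtain ⟨m, hm⟩ := support_nonempty.mpr h
  exact (Finset.sup_lt_iff ((Nat.zero_le _).trans_lt (key m hm))).mpr key

theorem pderiv_ne_zero_of_mem_vars [CommRing R] [IsDomain R] [CharZero R] {i : σ}
    {p : MvPolynomial σ R} (h : i ∈ p.vars) : pderiv i p ≠ 0 := by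
  classical
  obtain ⟨m, hm, hi⟩ := (mem_vars_iff_mem_support i).mp h
  have hle : Finsupp.single i 1 ≤ m :=
    Finsupp.single_le_iff.mpr (Nat.one_le_iff_ne_zero.mpr (Finsupp.mem_support_iff.mp hi))
  intro h0
  have := coeff_pderiv (i := i) p (m - Finsupp.single i 1)
  rw [h0, coeff_zero, tsub_add_cancel_of_le hle] at this
  exact mul_ne_zero (mem_support_iff.mp hm) (Nat.cast_add_one_ne_zero _) this.symm

theorem exists_mul_add_mul_ne_zero_notMem_vars [CommRing R] [IsDomain R]
    [UniqueFactorizationMonoid R] {a b : MvPolynomial σ R} {i : σ}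
    (ha : Irreducible a) (hi : i ∈ a.vars) (hab : ¬ a ∣ b) :
    ∃ p q : MvPolynomial σ R, a * p + b * q ≠ 0 ∧ i ∉ (a * p + b * q).vars := by
  classical
  let e := Equiv.optionSubtypeNe i
  let E : MvPolynomial σ R ≃ₐ[R] Polynomial (MvPolynomial {j // j ≠ i} R) :=
    (renameEquiv R e.symm).trans (optionEquivLeft R _)
  have hdeg : ∀ q, (E q).natDegree = q.degreeOf i := fun q => by
    rw [← degreeOf_rename_of_injective e.symm.injective, Equiv.optionSubtypeNe_symm_self]
    exact natDegree_optionEquivLeft R _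
  obtain ⟨p, q, c, hc, h⟩ := Polynomial.exists_mul_add_mul_eq_C_of_not_dvd
    ((MulEquiv.irreducible_iff E.toMulEquiv).mpr ha)
    ((hdeg a).trans_ne (mem_vars_iff_degreeOf_ne_zero.mp hi)) ((map_dvd_iff E).not.mpr hab)
  have hE : E (a * E.symm p + b * E.symm q) = Polynomial.C c := by simpa using h
  refine ⟨E.symm p, E.symm q, fun h0 => hc ?_, ?_⟩
  · simpa [h0] using hE.symm
  · rw [mem_vars_iff_degreeOf_ne_zero, not_not, ← hdeg, hE, Polynomial.natDegree_C]

theorem exists_mem_ne_zero_notMem_vars [CommRing R] [IsDomain R] [UniqueFactorizationMonoid R]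
    {I : Ideal (MvPolynomial σ R)} {a b : MvPolynomial σ R} (ha : Irreducible a) (hab : ¬ a ∣ b)
    (haI : a ∈ I) (hbI : b ∈ I) (i : σ) : ∃ r ∈ I, r ≠ 0 ∧ i ∉ r.vars := by
  by_cases hi : i ∈ a.vars
  · obtain ⟨p, q, h0, hr⟩ := exists_mul_add_mul_ne_zero_notMem_vars ha hi hab
    exact ⟨_, I.add_mem (I.mul_mem_right p haI) (I.mul_mem_right q hbI), h0, hr⟩
  · exact ⟨a, haI, ha.ne_zero, hi⟩

theorem exists_pderiv_notMem [Field R] [CharZero R] {I : Ideal (MvPolynomial σ R)} (hI : I ≠ ⊤)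
    {S : Set (MvPolynomial σ R)} (hS : ∀ q ∈ S, ∀ i, pderiv i q ∈ S)
    {q : MvPolynomial σ R} (hqS : q ∈ S) (hqI : q ∈ I) (hq0 : q ≠ 0) :
    ∃ p ∈ S, p ∈ I ∧ ∃ i, pderiv i p ∉ I := by
  induction hd : q.totalDegree using Nat.strong_induction_on generalizing q with
  | _ d ih =>
    obtain ⟨i, hi⟩ : ∃ i, i ∈ q.vars := by
      by_contra! h
      rw [← Finset.eq_empty_iff_forall_notMem, vars_eq_empty_iff_eq_C] at h
      have hc : coeff 0 q ≠ 0 := fun h0 => hq0 (by rw [h, h0, C_0])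
      exact hI (I.eq_top_of_isUnit_mem (h ▸ hqI) (hc.isUnit.map C))
    have hqi0 := pderiv_ne_zero_of_mem_vars hi
    by_cases hqi : pderiv i q ∈ I
    · exact ih _ (hd ▸ totalDegree_pderiv_lt hqi0) (hS q hqS i) hqi hqi0 rfl
    · exact ⟨q, hqS, hqI, i, hqi⟩

end MvPolynomial

open Matrix in
theorem Matrix.dvd_det_of_dvd_vecMul {R n : Type*} [CommRing R] [Fintype n] [DecidableEq n]
    {g : R} (hg : Prime g) (M : Matrix n n R) {v : n → R} {t : n} (hv : ¬ g ∣ v t)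
    (h : ∀ l, g ∣ (v ᵥ* M) l) : g ∣ M.det := by
  choose b hb using h
  have key : M.det • v = g • (b ᵥ* M.adjugate) := calc
    M.det • v = v ᵥ* (M * M.adjugate) := by rw [mul_adjugate, vecMul_smul, vecMul_one]
    _ = (g • b) ᵥ* M.adjugate := by rw [← vecMul_vecMul]; congr 1; exact funext hb
    _ = g • (b ᵥ* M.adjugate) := smul_vecMul _ _ _
  have hdvd : g ∣ M.det * v t := ⟨_, congrFun key t⟩
  exact (hg.dvd_mul.mp hdvd).resolve_right hv

section Jacobian

variable {σ τ R : Type*} [CommRing R] [Fintype σ]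

def IsJacobianNullVectorMod (g : MvPolynomial τ R) (f v : σ → MvPolynomial τ R) : Prop :=
  (∃ t, ¬ g ∣ v t) ∧ ∀ j, g ∣ ∑ t, v t * pderiv j (f t)

theorem sum_aeval_pderiv_mul_pderiv_of_eq_mul {f : σ → MvPolynomial τ R} {q : MvPolynomial σ R}
    {g c : MvPolynomial τ R} (h : aeval f q = g * c) (j : τ) :
    ∑ t, aeval f (pderiv t q) * pderiv j (f t) = pderiv j g * c + g * pderiv j c := by
  rw [← pderiv_aeval, h, pderiv_mul]

theorem isJacobianNullVectorMod_aeval_pderiv {f : σ → MvPolynomial τ R} {q : MvPolynomial σ R}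
    {g c : MvPolynomial τ R} (hq : aeval f q = g * c) (hc : g ∣ c) {t : σ}
    (ht : ¬ g ∣ aeval f (pderiv t q)) :
    IsJacobianNullVectorMod g f fun s => aeval f (pderiv s q) := by
  refine ⟨⟨t, ht⟩, fun j => ?_⟩
  rw [sum_aeval_pderiv_mul_pderiv_of_eq_mul hq]
  exact dvd_add (dvd_mul_of_dvd_right hc _) (dvd_mul_right _ _)

theorem isJacobianNullVectorMod_mul_sub_mul {f : σ → MvPolynomial τ R} {p r : MvPolynomial σ R}
    {g cp cr : MvPolynomial τ R} (hg : Prime g) (hp : aeval f p = g * cp)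
    (hr : aeval f r = g * cr) (hcr : ¬ g ∣ cr) {t : σ} (hrt : pderiv t r = 0)
    (hpt : ¬ g ∣ aeval f (pderiv t p)) :
    IsJacobianNullVectorMod g f fun s => cr * aeval f (pderiv s p) - cp * aeval f (pderiv s r) := by
  refine ⟨⟨t, ?_⟩, fun j => ⟨cr * pderiv j cp - cp * pderiv j cr, ?_⟩⟩
  · simp only [hrt, map_zero, mul_zero, sub_zero]
    exact fun h => (hg.dvd_mul.mp h).elim hcr hpt
  · simp only [sub_mul, mul_assoc, Finset.sum_sub_distrib, ← Finset.mul_sum,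
      sum_aeval_pderiv_mul_pderiv_of_eq_mul hp, sum_aeval_pderiv_mul_pderiv_of_eq_mul hr]
    ring

end Jacobian

theorem IsJacobianNullVectorMod.dvd_jacDet {k : Type*} [Field k] {m n : ℕ}
    {g : MvPolynomial (Fin n) k} {f v : Fin m → MvPolynomial (Fin n) k}
    (hv : IsJacobianNullVectorMod g f v) (hg : Prime g) (i : Fin m → Fin n) :
    g ∣ jacDet f i := by
  obtain ⟨⟨t, ht⟩, hsum⟩ := hv
  exact Matrix.dvd_det_of_dvd_vecMul hg _ ht fun l => by
    simpa [Matrix.vecMul, dotProduct] using hsum (i l)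

theorem exists_isJacobianNullVectorMod {σ τ k : Type*} [Field k] [CharZero k] [Fintype σ]
    {f : σ → MvPolynomial τ k} {g : MvPolynomial τ k} (hg : Prime g) {w : MvPolynomial σ k}
    (hw : Irreducible w) (hgw : g ^ 2 ∣ aeval f w) : ∃ v, IsJacobianNullVectorMod g f v := by
  let I := (Ideal.span {g}).comap (aeval (R := k) f)
  have hmem : ∀ q, q ∈ I ↔ g ∣ aeval f q := fun q => Ideal.mem_span_singleton
  have hI : I ≠ ⊤ := fun h => hg.not_isUnit (isUnit_of_dvd_one (by simpa [h] using hmem 1))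
  have hwI : w ∈ I := (hmem w).mpr ((dvd_pow_self g two_ne_zero).trans hgw)
  obtain ⟨p, -, hpI, t, hpt⟩ := exists_pderiv_notMem hI (S := Set.univ) (fun _ _ _ => trivial)
    trivial hwI hw.ne_zero
  obtain ⟨cp, hcp⟩ := (hmem p).mp hpI
  by_cases hgcp : g ∣ cp
  · exact ⟨_, isJacobianNullVectorMod_aeval_pderiv hcp hgcp ((hmem _).not.mp hpt)⟩
  have hwp : ¬ w ∣ p := fun hwp => hgcp <| (mul_dvd_mul_iff_left hg.ne_zero).mp <| by
    rw [← sq, ← hcp]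
    exact hgw.trans (map_dvd (aeval f) hwp)
  obtain ⟨r₀, hr₀I, hr₀, hr₀t⟩ := exists_mem_ne_zero_notMem_vars hw hwp hwI hpI t
  obtain ⟨r, hrt, hrI, s, hrs⟩ := exists_pderiv_notMem hI (S := {q | pderiv t q = 0})
    (fun q (hq : pderiv t q = 0) s => show pderiv t (pderiv s q) = 0 by
      rw [pderiv_comm, hq, map_zero])
    (pderiv_eq_zero_of_notMem_vars hr₀t) hr₀I hr₀
  obtain ⟨cr, hcr⟩ := (hmem r).mp hrI
  by_cases hgcr : g ∣ cr
  · exact ⟨_, isJacobianNullVectorMod_aeval_pderiv hcr hgcr ((hmem _).not.mp hrs)⟩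
  · exact ⟨_, isJacobianNullVectorMod_mul_sub_mul hg hcp hcr hgcr hrt ((hmem _).not.mp hpt)⟩

theorem statement3_general {k : Type*} [Field k] [CharZero k] {m n : ℕ}
    (f : Fin m → MvPolynomial (Fin n) k)
    (g : MvPolynomial (Fin n) k) (hg : Irreducible g)
    (h : ∃ w : MvPolynomial (Fin m) k, Irreducible w ∧ g ^ 2 ∣ aeval f w)
    (d : MvPolynomial (Fin n) k) (hd : IsDgcd f d) :
    g ∣ d := by
  obtain ⟨w, hw, hgw⟩ := h
  obtain ⟨v, hv⟩ := exists_isJacobianNullVectorMod hg.prime hw hgw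
  exact hd.2 g fun i _ => hv.dvd_jacDet hg.prime i

/-- If `g² ∣ w(f₁,…,f_m)` for some irreducible `w ∈ k[x₁,…,x_m]`, then
`g ∣ dgcd(f₁,…,f_m)`. -/
theorem statement3 {k : Type*} [Field k] [CharZero k] {m n : ℕ}
    (hm : 1 ≤ m) (hmn : m ≤ n)
    (f : Fin m → MvPolynomial (Fin n) k)
    (g : MvPolynomial (Fin n) k) (hg : Irreducible g)
    (h : ∃ w : MvPolynomial (Fin m) k, Irreducible w ∧ g ^ 2 ∣ aeval f w)
    (d : MvPolynomial (Fin n) k) (hd : IsDgcd f d) :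
    g ∣ d :=
  statement3_general f g hg h d hd
end

section
/- Let k be a field of characteristic zero, let f_1,…,f_m ∈ k[x_1,…,x_n] be polynomials with 1 ≤ m ≤ n, and let g ∈ k[x_1,…,x_n] be an irreducible polynomial. Then g divides dgcd(f_1,…,f_m) if and only if there exists an index i ∈ {1,…,m} and polynomials s_1,…,s_m ∈ k[x_1,…,x_n] with g ∤ s_i such that g divides s_1·d(f_1) + … + s_m·d(f_m) for every k-derivation d of k[x_1,…,x_n]. -/
open MvPolynomial

/-!
Reduce modulo the prime `g`. In the domain `A = k[x₁,…,xₙ]/(g)`, all maximal minors of the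
Jacobian matrix `(∂fⱼ/∂xₗ)` vanish iff its rows are linearly dependent over `A`: over the fraction
field of `A`, independent rows give `m` independent columns and hence a nonzero maximal minor.
A dependence relation lifts to `s` with some `sᵢ ∉ (g)` and `g ∣ ∑ⱼ sⱼ ∂fⱼ/∂xₗ` for all `l`, and
since every derivation is `D = ∑ₗ D(xₗ) ∂/∂xₗ`, this says exactly that `g ∣ ∑ⱼ sⱼ D(fⱼ)` for all `D`.
-/

open Matrix

namespace Matrix

theorem exists_strictMono_det_submatrix_ne_zero {K : Type*} [Field K] {m n : ℕ}
    (M : Matrix (Fin m) (Fin n) K) (hM : LinearIndependent K M.row) :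
    ∃ ι : Fin m → Fin n, StrictMono ι ∧ (M.submatrix id ι).det ≠ 0 := by
  classical
  -- `b` indexes columns of `M` forming a basis of its column space
  obtain ⟨b, -, -, hspan, hb⟩ :=
    exists_linearIndepOn_extension (linearIndepOn_empty K M.col) (Set.empty_subset Set.univ)
  have hspan_eq : Submodule.span K (M.col '' b) = Submodule.span K (Set.range M.col) :=
    le_antisymm (Submodule.span_mono (Set.image_subset_range _ _))
      (Submodule.span_le.mpr (by rwa [← Set.image_univ]))
  have hcard : b.toFinset.card = m :=
    calc b.toFinset.card = Fintype.card b := Set.toFinset_card b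
      _ = Module.finrank K (Submodule.span K (M.col '' b)) := by
        rw [Set.image_eq_range, finrank_span_eq_card hb]
      _ = M.rank := by rw [hspan_eq, rank_eq_finrank_span_cols]
      _ = m := by rw [hM.rank_matrix, Fintype.card_fin]
  set ι := b.toFinset.orderEmbOfFin hcard
  refine ⟨ι, ι.strictMono, ?_⟩
  have hmem (l : Fin m) : ι l ∈ b := Set.mem_toFinset.mp (b.toFinset.orderEmbOfFin_mem hcard l)
  have hcols : LinearIndependent K (M.submatrix id ι).col :=
    hb.comp (Set.codRestrict ι b hmem) (ι.injective.codRestrict hmem)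
  exact ((isUnit_iff_isUnit_det _).mp (linearIndependent_cols_iff_isUnit.mp hcols)).ne_zero

theorem exists_vecMul_eq_zero_iff_forall_det_submatrix_eq_zero {A : Type*} [CommRing A]
    [IsDomain A] {m n : ℕ} (M : Matrix (Fin m) (Fin n) A) :
    (∃ v ≠ 0, v ᵥ* M = 0) ↔ ∀ ι : Fin m → Fin n, StrictMono ι → (M.submatrix id ι).det = 0 := by
  constructor
  · rintro ⟨v, hv, hvM⟩ ι -
    exact exists_vecMul_eq_zero_iff.mp ⟨v, hv, funext fun l => congrFun hvM (ι l)⟩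
  · intro hM
    by_contra! hv
    have hrows : LinearIndependent A M.row := Fintype.linearIndependent_iff.mpr fun v hv' =>
      funext_iff.mp (by_contra fun h => hv v h (by rwa [vecMul_eq_sum]))
    let K := FractionRing A
    have hrowsK : LinearIndependent K (M.map (algebraMap A K)).row :=
      (LinearIndependent.iff_fractionRing A K).mp <| hrows.map'
        (LinearMap.compLeft (Algebra.linearMap A K) (Fin n))
        (LinearMap.ker_eq_bot.mpr (IsFractionRing.injective A K).comp_left)
    obtain ⟨ι, hι, hdet⟩ := exists_strictMono_det_submatrix_ne_zero _ hrowsK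
    rw [submatrix_map, ← RingHom.mapMatrix_apply, ← RingHom.map_det, hM ι hι, map_zero] at hdet
    exact hdet rfl

end Matrix

theorem Ideal.forall_det_submatrix_mem_iff {R : Type*} [CommRing R] (P : Ideal R) [P.IsPrime]
    {m n : ℕ} (N : Matrix (Fin m) (Fin n) R) :
    (∀ ι : Fin m → Fin n, StrictMono ι → (N.submatrix id ι).det ∈ P) ↔
      ∃ (i : Fin m) (s : Fin m → R), s i ∉ P ∧ ∀ l, ∑ j, s j * N j l ∈ P := by
  have hmod (s : Fin m → R) (l : Fin n) : Ideal.Quotient.mk P (∑ j, s j * N j l) =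
      ((Ideal.Quotient.mk P ∘ s) ᵥ* N.map (Ideal.Quotient.mk P)) l :=
    RingHom.map_vecMul _ N s l
  simp_rw [← Ideal.Quotient.eq_zero_iff_mem, RingHom.map_det, RingHom.mapMatrix_apply,
    ← Matrix.submatrix_map, ← (N.map _).exists_vecMul_eq_zero_iff_forall_det_submatrix_eq_zero,
    hmod]
  constructor
  · rintro ⟨v, hv, hvN⟩
    obtain ⟨i, hi⟩ := Function.ne_iff.mp hv
    obtain ⟨s, rfl⟩ := Ideal.Quotient.mk_surjective.comp_left v
    exact ⟨i, s, hi, fun l => congrFun hvN l⟩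
  · rintro ⟨i, s, hsi, hs⟩
    exact ⟨_, Function.ne_iff.mpr ⟨i, hsi⟩, funext hs⟩

theorem MvPolynomial.derivation_eq_sum_pderiv_smul {R σ M : Type*} [CommSemiring R] [Fintype σ]
    [AddCommMonoid M] [Module (MvPolynomial σ R) M] [Module R M]
    [IsScalarTower R (MvPolynomial σ R) M]
    (D : Derivation R (MvPolynomial σ R) M) (p : MvPolynomial σ R) :
    D p = ∑ l, pderiv l p • D (X l) := by
  classical
  induction p using MvPolynomial.induction_on with
  | C a => simp [derivation_C]
  | add p q hp hq => simp [hp, hq, add_smul, Finset.sum_add_distrib]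
  | mul_X p i hp =>
    simp [Derivation.leibniz, hp, pderiv_X, Pi.single_apply, add_smul, Finset.sum_add_distrib,
      Finset.smul_sum, mul_smul]

theorem MvPolynomial.forall_derivation_sum_mul_mem_iff {R σ ι : Type*} [CommSemiring R]
    [Fintype σ] [Fintype ι] (I : Ideal (MvPolynomial σ R)) (s f : ι → MvPolynomial σ R) :
    (∀ D : Derivation R (MvPolynomial σ R) (MvPolynomial σ R), ∑ j, s j * D (f j) ∈ I) ↔
      ∀ l, ∑ j, s j * pderiv l (f j) ∈ I := by
  refine ⟨fun h l => h (pderiv l), fun h D => ?_⟩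
  have hD : ∑ j, s j * D (f j) = ∑ l, (∑ j, s j * pderiv l (f j)) * D (X l) := by
    simp_rw [derivation_eq_sum_pderiv_smul D (f _), smul_eq_mul, Finset.mul_sum, Finset.sum_mul,
      mul_assoc]
    exact Finset.sum_comm
  rw [hD]
  exact I.sum_mem fun l _ => I.mul_mem_right _ (h l)

theorem jacDet_eq_det_submatrix {k : Type*} [Field k] {m n : ℕ}
    (f : Fin m → MvPolynomial (Fin n) k) (ι : Fin m → Fin n) :
    jacDet f ι = ((Matrix.of fun j l => pderiv l (f j)).submatrix id ι).det :=
  rfl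

theorem statement8_general {k : Type*} [Field k] {m n : ℕ}
    (f : Fin m → MvPolynomial (Fin n) k)
    (g : MvPolynomial (Fin n) k) (hg : Irreducible g)
    (d : MvPolynomial (Fin n) k) (hd : IsDgcd f d) :
    g ∣ d ↔
      ∃ (i : Fin m) (s : Fin m → MvPolynomial (Fin n) k), ¬ g ∣ s i ∧
        ∀ D : Derivation k (MvPolynomial (Fin n) k) (MvPolynomial (Fin n) k),
          g ∣ ∑ j, s j * D (f j) := by
  have : (Ideal.span {g}).IsPrime := (Ideal.span_singleton_prime hg.ne_zero).mpr hg.prime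
  have hdvd : g ∣ d ↔ ∀ ι, StrictMono ι → g ∣ jacDet f ι :=
    ⟨fun h ι hι => h.trans (hd.1 ι hι), hd.2 g⟩
  simp_rw [hdvd, jacDet_eq_det_submatrix, ← Ideal.mem_span_singleton,
    forall_derivation_sum_mul_mem_iff]
  exact Ideal.forall_det_submatrix_mem_iff _ _

/-- Lemma 1.a: `g ∣ dgcd(f₁,…,f_m)` iff there are an index `i` and polynomials
`s₁,…,s_m` with `g ∤ sᵢ` such that `g ∣ s₁·d(f₁) + … + s_m·d(f_m)` for every
`k`-derivation `d` of `k[x₁,…,xₙ]`. -/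
theorem statement8 {k : Type*} [Field k] [CharZero k] {m n : ℕ}
    (hm : 1 ≤ m) (hmn : m ≤ n)
    (f : Fin m → MvPolynomial (Fin n) k)
    (g : MvPolynomial (Fin n) k) (hg : Irreducible g)
    (d : MvPolynomial (Fin n) k) (hd : IsDgcd f d) :
    g ∣ d ↔
      ∃ (i : Fin m) (s : Fin m → MvPolynomial (Fin n) k), ¬ g ∣ s i ∧
        ∀ D : Derivation k (MvPolynomial (Fin n) k) (MvPolynomial (Fin n) k),
          g ∣ ∑ j, s j * D (f j) :=
  statement8_general f g hg d hd
end

section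
/- Let k be a field of characteristic zero, let f_1,…,f_m ∈ k[x_1,…,x_n] be polynomials with 1 ≤ m ≤ n, and let g ∈ k[x_1,…,x_n] be an irreducible polynomial. Fix i ∈ {1,…,m} and suppose there exist polynomials s_1,…,s_m ∈ k[x_1,…,x_n] with g ∤ s_i such that g divides s_1·d(f_1) + … + s_m·d(f_m) for every k-derivation d of k[x_1,…,x_n]. Then, denoting by f̄ the image of a polynomial f in the quotient domain k[x_1,…,x_n]/(g), the element f̄_i is algebraic over the subfield k(f̄_1,…,f̄_{i-1}, f̄_{i+1},…,f̄_m) of the field of fractions of k[x_1,…,x_n]/(g). -/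
open MvPolynomial

/-!
Let `L` be the fraction field of `k[x₁,…,xₙ]/(g)` and `F = k(f̄ⱼ : j ≠ i) ⊆ L`. If `f̄ᵢ` were
transcendental over `F`, then, in characteristic zero, some `F`-derivation `δ` of `L` would
satisfy `δ f̄ᵢ = 1`: take `∂/∂t` on the polynomial ring of a transcendence basis through
`t = f̄ᵢ` and extend it along the algebraic, hence formally étale, extension to `L`. By the chain
rule `δ p̄ = ∑ₗ (∂ₗ p)‾ · δ x̄ₗ`, so the hypothesis for the derivations `∂ₗ` gives
`∑ⱼ s̄ⱼ · δ f̄ⱼ = 0`; but this sum is `s̄ᵢ ≠ 0`.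
-/

theorem Derivation.exists_compAlgebraMap_eq_of_formallyEtale {R S T M : Type*} [CommRing R]
    [CommRing S] [CommRing T] [Algebra R S] [Algebra R T] [Algebra S T] [IsScalarTower R S T]
    [AddCommGroup M] [Module R M] [Module S M] [Module T M] [IsScalarTower R S M]
    [IsScalarTower R T M] [IsScalarTower S T M]
    [Algebra.FormallyEtale S T] (d : Derivation R S M) :
    ∃ D : Derivation R T M, D.compAlgebraMap S = d := by
  refine ⟨((d.liftKaehlerDifferential.liftBaseChange T) ∘ₗ
    (KaehlerDifferential.tensorKaehlerEquivOfFormallyEtale R S T).symm.toLinearMap).compDer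
    (KaehlerDifferential.D R T), ?_⟩
  ext s
  simp [KaehlerDifferential.tensorKaehlerEquivOfFormallyEtale_symm_D_algebraMap]

theorem Algebra.FormallyEtale.of_isAlgebraic_of_charZero (S L : Type*) [CommRing S] [IsDomain S]
    [Field L] [CharZero L] [Algebra S L] [FaithfulSMul S L] [Algebra.IsAlgebraic S L] :
    Algebra.FormallyEtale S L := by
  let : Algebra (FractionRing S) L := FractionRing.liftAlgebra S L
  have : CharZero (FractionRing S) := (algebraMap (FractionRing S) L).charZero
  have : Algebra.IsAlgebraic (FractionRing S) L :=
    Algebra.IsAlgebraic.extendScalars (IsFractionRing.injective S (FractionRing S))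
  have : Algebra.IsSeparable (FractionRing S) L := Algebra.IsSeparable.of_integral _ _
  have : Algebra.FormallyEtale S (FractionRing S) := .of_isLocalization (nonZeroDivisors S)
  have : Algebra.FormallyEtale (FractionRing S) L := .of_isSeparable _ _
  exact Algebra.FormallyEtale.comp S (FractionRing S) L

theorem Derivation.map_aeval_mvPolynomial {R A M σ : Type*} [Fintype σ] [CommSemiring R]
    [CommSemiring A] [Algebra R A] [AddCommMonoid M] [Module A M] [Module R M]
    [IsScalarTower R A M] (D : Derivation R A M) (x : σ → A) (p : MvPolynomial σ R) :
    D (aeval x p) = ∑ i, aeval x (pderiv i p) • D (x i) := by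
  induction p using MvPolynomial.induction_on with
  | C a => simp
  | add p q hp hq => simp [hp, hq, add_smul, Finset.sum_add_distrib]
  | mul_X p j hp =>
    classical
    simp [hp, Derivation.leibniz, pderiv_X, add_smul, Finset.sum_add_distrib, mul_smul,
      Finset.smul_sum, Pi.single_apply, apply_ite, ite_smul]

theorem exists_derivation_eq_one_of_transcendental {K L : Type*} [Field K] [Field L]
    [Algebra K L] [CharZero K] {t : L} (ht : Transcendental K t) : ∃ D : Derivation K L L, D t = 1 := by
  classical
  obtain ⟨u, htu, hu⟩ := exists_isTranscendenceBasis_superset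
    ((algebraicIndependent_singleton_iff (x := ((↑) : ({t} : Set L) → L)) ⟨t, rfl⟩).mpr ht)
  let : Algebra (MvPolynomial u K) L := (aeval ((↑) : u → L)).toAlgebra
  have : IsScalarTower K (MvPolynomial u K) L := .of_algebraMap_eq fun c => (aeval_C _ c).symm
  have : FaithfulSMul (MvPolynomial u K) L :=
    (faithfulSMul_iff_algebraMap_injective _ _).mpr hu.1
  have : Algebra.IsAlgebraic (MvPolynomial u K) L :=
    (Algebra.isAlgebraic_ringHom_iff_of_comp_eq hu.1.aevalEquiv (RingEquiv.refl L) rfl).mp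
      hu.isAlgebraic
  have : CharZero L := charZero_of_injective_algebraMap (algebraMap K L).injective
  have := Algebra.FormallyEtale.of_isAlgebraic_of_charZero (MvPolynomial u K) L
  obtain ⟨D, hD⟩ := Derivation.exists_compAlgebraMap_eq_of_formallyEtale (T := L)
    (mkDerivation K (Pi.single ⟨t, htu rfl⟩ 1) : Derivation K (MvPolynomial u K) L)
  refine ⟨D, ?_⟩
  have hXt : algebraMap (MvPolynomial u K) L (X ⟨t, htu rfl⟩) = t := aeval_X _ _
  simpa [hXt, mkDerivation_X] using congr($hD (X ⟨t, htu rfl⟩))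

open IntermediateField.algebraAdjoinAdjoin in
theorem Transcendental.intermediateField_adjoin_image {k A L : Type*} [Field k] [CommRing A]
    [Field L] [Algebra k A] [Algebra k L] (ψ : A →ₐ[k] L) (hψ : Function.Injective ψ)
    {s : Set A} {a : A} (h : Transcendental (Algebra.adjoin k s) a) :
    Transcendental (IntermediateField.adjoin k (ψ '' s)) (ψ a) := by
  let e : Algebra.adjoin k s ≃ₐ[k] Algebra.adjoin k (ψ '' s) :=
    ((Algebra.adjoin k s).equivMapOfInjective ψ hψ).trans
      (Subalgebra.equivOfEq _ _ (ψ.map_adjoin s))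
  have h' : Transcendental (Algebra.adjoin k (ψ '' s)) (ψ a) :=
    (transcendental_ringHom_iff_of_comp_eq e ψ hψ rfl).mpr h
  exact mt (IsFractionRing.isAlgebraic_iff _ _ _).mpr h'

theorem sum_mul_derivation_eq_zero_of_forall_dvd {R B σ ι : Type*} [CommRing R] [CommRing B]
    [Algebra R B] [Fintype σ] [Fintype ι] {f s : ι → MvPolynomial σ R} {g : MvPolynomial σ R}
    (hs : ∀ D : Derivation R (MvPolynomial σ R) (MvPolynomial σ R), g ∣ ∑ j, s j * D (f j))
    (φ : MvPolynomial σ R →ₐ[R] B) (hφg : φ g = 0) (δ : Derivation R B B) :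
    ∑ j, φ (s j) * δ (φ (f j)) = 0 := by
  have hchain (p : MvPolynomial σ R) : δ (φ p) = ∑ l, φ (pderiv l p) * δ (φ (X l)) := by
    conv_lhs => rw [aeval_unique φ]
    rw [δ.map_aeval_mvPolynomial, ← aeval_unique φ]
    rfl
  calc ∑ j, φ (s j) * δ (φ (f j))
      = ∑ j, φ (s j) * ∑ l, φ (pderiv l (f j)) * δ (φ (X l)) :=
        Finset.sum_congr rfl fun j _ => by rw [hchain]
    _ = ∑ l, φ (∑ j, s j * pderiv l (f j)) * δ (φ (X l)) := by
        simp only [map_sum, map_mul, Finset.mul_sum, Finset.sum_mul, mul_assoc]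
        exact Finset.sum_comm
    _ = 0 := Finset.sum_eq_zero fun l _ => by
        obtain ⟨q, hq⟩ := hs (pderiv l)
        rw [hq, map_mul, hφg, zero_mul, zero_mul]

theorem statement9_general {k : Type*} [Field k] [CharZero k] {m n : ℕ}
    (f : Fin m → MvPolynomial (Fin n) k)
    (g : MvPolynomial (Fin n) k) (hg : Irreducible g)
    (i : Fin m) (s : Fin m → MvPolynomial (Fin n) k) (hsi : ¬ g ∣ s i)
    (hs : ∀ D : Derivation k (MvPolynomial (Fin n) k) (MvPolynomial (Fin n) k),
      g ∣ ∑ j, s j * D (f j)) :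
    IsAlgebraic
      (Algebra.adjoin k
        ((fun j => Ideal.Quotient.mk (Ideal.span {g}) (f j)) '' {j : Fin m | j ≠ i}))
      (Ideal.Quotient.mk (Ideal.span {g}) (f i)) := by
  have : (Ideal.span {g}).IsPrime := (Ideal.span_singleton_prime hg.ne_zero).mpr hg.prime
  let A := MvPolynomial (Fin n) k ⧸ Ideal.span {g}
  let ψ : A →ₐ[k] FractionRing A := IsScalarTower.toAlgHom k A (FractionRing A)
  let φ := ψ.comp (Ideal.Quotient.mkₐ k (Ideal.span {g}))
  have hψ : Function.Injective ψ := IsFractionRing.injective A (FractionRing A)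
  have hφ (p : MvPolynomial (Fin n) k) : φ p = 0 ↔ g ∣ p := by
    rw [AlgHom.comp_apply, map_eq_zero_iff ψ hψ, Ideal.Quotient.mkₐ_eq_mk,
      Ideal.Quotient.eq_zero_iff_mem, Ideal.mem_span_singleton]
  by_contra htrans
  obtain ⟨δ, hδ⟩ := exists_derivation_eq_one_of_transcendental
    (Transcendental.intermediateField_adjoin_image ψ hψ htrans)
  have hδf (j : Fin m) (hj : j ≠ i) : δ (φ (f j)) = 0 :=
    δ.map_algebraMap ⟨φ (f j), IntermediateField.subset_adjoin _ _ ⟨_, ⟨j, hj, rfl⟩, rfl⟩⟩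
  have hsum := sum_mul_derivation_eq_zero_of_forall_dvd hs φ ((hφ g).mpr dvd_rfl)
    (δ.restrictScalars k)
  rw [Finset.sum_eq_single i (fun j _ hj => by simp [hδf j hj]) (by simp)] at hsum
  have hδi : δ (φ (f i)) = 1 := hδ
  exact hsi ((hφ (s i)).mp (by simpa [hδi] using hsum))

/-- Lemma 1.b: if for some index `i` there exist `s₁,…,s_m` with `g ∤ sᵢ` such that
`g ∣ s₁·d(f₁) + … + s_m·d(f_m)` for every `k`-derivation `d` of `k[x₁,…,xₙ]`, then
the image `f̄ᵢ` of `fᵢ` in `k[x₁,…,xₙ]/(g)` is algebraic over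
`k(f̄₁,…,f̄_{i-1},f̄_{i+1},…,f̄_m)`.  (Since the quotient is a domain, being
algebraic over this subfield of the fraction field is equivalent to being
algebraic over the subalgebra `k[f̄₁,…,f̄_{i-1},f̄_{i+1},…,f̄_m]`, which is how
the conclusion is stated.) -/
theorem statement9 {k : Type*} [Field k] [CharZero k] {m n : ℕ}
    (hm : 1 ≤ m) (hmn : m ≤ n)
    (f : Fin m → MvPolynomial (Fin n) k)
    (g : MvPolynomial (Fin n) k) (hg : Irreducible g)
    (i : Fin m) (s : Fin m → MvPolynomial (Fin n) k) (hsi : ¬ g ∣ s i)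
    (hs : ∀ D : Derivation k (MvPolynomial (Fin n) k) (MvPolynomial (Fin n) k),
      g ∣ ∑ j, s j * D (f j)) :
    IsAlgebraic
      (Algebra.adjoin k
        ((fun j => Ideal.Quotient.mk (Ideal.span {g}) (f j)) '' {j : Fin m | j ≠ i}))
      (Ideal.Quotient.mk (Ideal.span {g}) (f i)) :=
  statement9_general f g hg i s hsi hs
end

section
/- Let k be a field of characteristic zero and let 1 ≤ m < n with n ≥ 2. Set f_1 = x_1²x_2 and, if m > 1, f_2 = x_3, …, f_m = x_{m+1} in k[x_1,…,x_n]. Then dgcd(f_1,…,f_m) is associated to x_1 (in particular it is not a nonzero element of k), and yet the subalgebra k[f_1,…,f_m] is algebraically closed in k[x_1,…,x_n]. Hence for m < n the condition 'dgcd(f_1,…,f_m) ∈ k∖{0}' is not necessary for k[f_1,…,f_m] to be algebraically closed in k[x_1,…,x_n]. -/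
open MvPolynomial

/-- A subalgebra `R` of a domain `A` is algebraically closed in `A` if every element
of `A` algebraic over `R` (equivalently, over the field of fractions of `R`)
belongs to `R`. -/
def AlgClosedIn {k A : Type*} [Field k] [CommRing A] [Algebra k A]
    (R : Subalgebra k A) : Prop :=
  ∀ a : A, IsAlgebraic R a → a ∈ R

/-!
Variables are indexed from `0`, so `f₀ = x₀²x₁` and `f_j = x_{j+1}` for `j ≥ 1`.
Every Jacobian matrix has first row `∇(x₀²x₁)`, whose entries are divisible by `x₀`. The minors
on the variables `x₁, x₂, …, x_m` and on `x₀, x₂, …, x_m` are triangular with determinants `x₀²`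
and `2x₀x₁`, so every common divisor of the minors divides `x₀`.

In characteristic zero, a derivation killing a subalgebra `R` kills every element algebraic over
`R` (differentiate a polynomial relation of minimal degree). The derivations `x₀∂₀ - 2x₁∂₁` and
`∂_c` for `c > m` kill `R = k[x₀²x₁, x₂, …, x_m]`, so an element algebraic over `R` only involves
monomials `x^μ` with `μ₀ = 2μ₁` and no variable beyond `x_m`, and these monomials lie in `R`.
-/

section Derivation
variable {k A : Type*} [CommRing k] [CommRing A] [Algebra k A]

theorem Derivation.map_aeval_of_forall_mem (D : Derivation k A A) {R : Subalgebra k A}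
    (hR : ∀ r ∈ R, D r = 0) (a : A) (p : Polynomial R) :
    D (Polynomial.aeval a p) = Polynomial.aeval a (Polynomial.derivative p) * D a := by
  induction p using Polynomial.induction_on' with
  | add p q hp hq => simp only [map_add, hp, hq, add_mul]
  | monomial n r =>
    have hr : D (algebraMap R A r) = 0 := hR r r.2
    rw [Polynomial.aeval_monomial, Polynomial.derivative_monomial, Polynomial.aeval_monomial,
      D.leibniz, hr, D.leibniz_pow, map_mul, _root_.map_natCast]
    simp only [smul_eq_mul, nsmul_eq_mul]
    ring

theorem Derivation.apply_eq_zero_of_isAlgebraic [IsDomain A] [CharZero A] (D : Derivation k A A)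
    {R : Subalgebra k A} (hR : ∀ r ∈ R, D r = 0) {a : A} (ha : IsAlgebraic R a) : D a = 0 := by
  by_contra hDa
  suffices ∀ p : Polynomial R, p ≠ 0 → Polynomial.aeval a p ≠ 0 from
    let ⟨p, hp, hpa⟩ := ha; this p hp hpa
  intro p
  induction hd : p.natDegree using Nat.strong_induction_on generalizing p with
  | _ d ih =>
    intro hp hpa
    rcases eq_or_ne d 0 with rfl | hd0
    · rw [Polynomial.eq_C_of_natDegree_eq_zero hd, Polynomial.aeval_C,
        FaithfulSMul.algebraMap_eq_zero_iff] at hpa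
      exact hp (Polynomial.eq_C_of_natDegree_eq_zero hd ▸ hpa ▸ Polynomial.C_0)
    · have hp' : p.natDegree ≠ 0 := hd ▸ hd0
      refine ih _ (hd ▸ Polynomial.natDegree_derivative_lt hp') _ rfl
        (Polynomial.derivative_ne_zero.2 hp') ?_
      have hD := D.map_aeval_of_forall_mem hR a p
      rw [hpa, map_zero] at hD
      exact (mul_eq_zero.1 hD.symm).resolve_right hDa

theorem Derivation.dvd_apply_of_sq_dvd (D : Derivation k A A) {p q : A} (h : p ^ 2 ∣ q) :
    p ∣ D q := by
  obtain ⟨g, rfl⟩ := h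
  rw [D.leibniz, D.leibniz_pow]
  simp only [smul_eq_mul, nsmul_eq_mul, Nat.cast_ofNat, Nat.add_one_sub_one, pow_one]
  exact ⟨p * D g + 2 * g * D p, by ring⟩

end Derivation

theorem dvd_of_dvd_sq_of_dvd_mul {α : Type*} [CommMonoidWithZero α] [IsCancelMulZero α]
    {p q e : α} (hp : Prime p) (hpq : ¬p ∣ q) (h₁ : e ∣ p ^ 2) (h₂ : e ∣ p * q) : e ∣ p := by
  obtain ⟨i, hi, he⟩ := (dvd_prime_pow hp 2).1 h₁
  rcases Nat.lt_or_ge i 2 with hi' | hi'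
  · exact he.dvd.trans ((pow_dvd_pow p (by omega : i ≤ 1)).trans (pow_one p).dvd)
  · obtain rfl : i = 2 := by omega
    rw [sq] at he
    exact absurd ((mul_dvd_mul_iff_left hp.ne_zero).1 (he.symm.dvd.trans h₂)) hpq

namespace MvPolynomial

section CommSemiring
variable {R σ : Type*} [CommSemiring R]

theorem coeff_X_mul_pderiv (i : σ) (p : MvPolynomial σ R) (μ : σ →₀ ℕ) :
    coeff μ (X i * pderiv i p) = μ i * coeff μ p := by
  induction p using MvPolynomial.induction_on' with
  | monomial s r =>
    classical
    simp only [X_mul_pderiv_monomial, coeff_smul, coeff_monomial]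
    split_ifs with h <;> simp [h, nsmul_eq_mul]
  | add p q hp hq => rw [map_add, mul_add, coeff_add, coeff_add, hp, hq, mul_add]

theorem pderiv_X_sq_mul_X_left {a b : σ} (hab : a ≠ b) :
    pderiv a (X a ^ 2 * X b : MvPolynomial σ R) = X a * (2 * X b) := by
  rw [pderiv_mul, pderiv_pow, pderiv_X_self, pderiv_X_of_ne hab.symm, Nat.cast_ofNat,
    Nat.add_one_sub_one, pow_one]
  ring

theorem pderiv_X_sq_mul_X_right {a b : σ} (hab : a ≠ b) :
    pderiv b (X a ^ 2 * X b : MvPolynomial σ R) = X a ^ 2 := by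
  rw [pderiv_mul, pderiv_pow, pderiv_X_of_ne hab, pderiv_X_self]
  ring

theorem monomial_mem_adjoin_X_sq_mul_X {a b : σ} (hab : a ≠ b) {s : Set σ} {μ : σ →₀ ℕ}
    (hμab : μ a = 2 * μ b) (hμs : ∀ c, c ≠ a → c ≠ b → c ∉ s → μ c = 0) (r : R) :
    monomial μ r ∈ Algebra.adjoin R (insert (X a ^ 2 * X b) (X '' s)) := by
  classical
  set ν := μ.filter fun c => c ≠ a ∧ c ≠ b
  have hμ : μ = μ b • (Finsupp.single a 2 + Finsupp.single b 1) + ν := by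
    ext c
    by_cases hca : c = a
    · subst hca; simp [ν, hab, hμab, mul_comm]
    by_cases hcb : c = b
    · subst hcb; simp [ν, hca]
    · simp [ν, hca, hcb]
  have hsplit : monomial μ (1 : R) = (X a ^ 2 * X b) ^ μ b * ν.prod fun c e => X c ^ e := by
    rw [X_pow_eq_monomial, X, monomial_mul, monomial_pow, Finsupp.prod, prod_X_pow_eq_monomial,
      monomial_mul, ← hμ, mul_one, mul_one, one_pow]
  rw [← mul_one r, ← C_mul_monomial, hsplit]
  refine mul_mem (Subalgebra.algebraMap_mem _ r) (mul_mem
    (pow_mem (Algebra.subset_adjoin (Set.mem_insert _ _)) _)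
    (Subalgebra.prod_mem _ fun c hc => pow_mem (Algebra.subset_adjoin
      (Set.mem_insert_of_mem _ (Set.mem_image_of_mem X ?_))) _))
  obtain ⟨hμc, hca, hcb⟩ : μ c ≠ 0 ∧ c ≠ a ∧ c ≠ b := by simpa [ν] using hc
  by_contra hcs
  exact hμc (hμs c hca hcb hcs)

end CommSemiring

section CommRing
variable {R σ : Type*} [CommRing R]

/-- The generator of the torus action `x_a ↦ t x_a`, `x_b ↦ t⁻² x_b`, which fixes `x_a² x_b`. -/
noncomputable def scalingDerivation (a b : σ) :
    Derivation R (MvPolynomial σ R) (MvPolynomial σ R) :=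
  (X a : MvPolynomial σ R) • pderiv a - (2 * X b : MvPolynomial σ R) • pderiv b

theorem scalingDerivation_apply (a b : σ) (p : MvPolynomial σ R) :
    scalingDerivation a b p = X a * pderiv a p - 2 * (X b * pderiv b p) := by
  rw [scalingDerivation, Derivation.sub_apply, Derivation.smul_apply, Derivation.smul_apply,
    smul_eq_mul, smul_eq_mul, mul_assoc]

theorem coeff_scalingDerivation (a b : σ) (p : MvPolynomial σ R) (μ : σ →₀ ℕ) :
    coeff μ (scalingDerivation a b p) = (μ a - 2 * μ b) * coeff μ p := by
  rw [scalingDerivation_apply, coeff_sub, ← map_ofNat C 2, coeff_C_mul, coeff_X_mul_pderiv,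
    coeff_X_mul_pderiv]
  ring

theorem scalingDerivation_X_sq_mul_X {a b : σ} (hab : a ≠ b) :
    scalingDerivation a b (X a ^ 2 * X b : MvPolynomial σ R) = 0 := by
  rw [scalingDerivation_apply, pderiv_X_sq_mul_X_left hab, pderiv_X_sq_mul_X_right hab]
  ring

theorem scalingDerivation_X {a b c : σ} (hca : c ≠ a) (hcb : c ≠ b) :
    scalingDerivation a b (X c : MvPolynomial σ R) = 0 := by
  rw [scalingDerivation_apply, pderiv_X_of_ne hca, pderiv_X_of_ne hcb, mul_zero, mul_zero,
    mul_zero, sub_zero]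

end CommRing

theorem not_associated_C_X {k σ : Type*} [Field k] (c : k) (i : σ) :
    ¬Associated (C c) (X i : MvPolynomial σ k) := by
  intro h
  rcases eq_or_ne c 0 with rfl | hc
  · exact X_ne_zero i (h.eq_zero_iff.1 C_0)
  · exact X_prime.not_isUnit (h.isUnit ((isUnit_iff_ne_zero.2 hc).map C))

theorem algClosedIn_adjoin_X_sq_mul_X {k σ : Type*} [Field k] [CharZero k] {a b : σ}
    (hab : a ≠ b) {s : Set σ} (has : a ∉ s) (hbs : b ∉ s) :
    AlgClosedIn (Algebra.adjoin k (insert (X a ^ 2 * X b) (X '' s : Set (MvPolynomial σ k)))) := by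
  intro p hp
  have killed : ∀ D : Derivation k (MvPolynomial σ k) (MvPolynomial σ k),
      (∀ g ∈ insert (X a ^ 2 * X b) (X '' s), D g = 0) → D p = 0 := fun D hD =>
    D.apply_eq_zero_of_isAlgebraic (fun r hr => D.eqOn_adjoin (D2 := 0) hD hr) hp
  have h_scaling : scalingDerivation (R := k) a b p = 0 := by
    refine killed _ ?_
    rintro _ (rfl | ⟨c, hc, rfl⟩)
    · exact scalingDerivation_X_sq_mul_X hab
    · exact scalingDerivation_X (ne_of_mem_of_not_mem hc has) (ne_of_mem_of_not_mem hc hbs)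
  have h_pderiv : ∀ c, c ≠ a → c ≠ b → c ∉ s → pderiv c p = 0 := by
    intro c hca hcb hcs
    refine killed _ ?_
    rintro _ (rfl | ⟨d, hd, rfl⟩)
    · simp [hca.symm, hcb.symm]
    · exact pderiv_X_of_ne (ne_of_mem_of_not_mem hd hcs)
  rw [← support_sum_monomial_coeff p]
  refine Subalgebra.sum_mem _ fun μ hμ => monomial_mem_adjoin_X_sq_mul_X hab ?_ ?_ _
  · have h := congrArg (coeff μ) h_scaling
    rw [coeff_scalingDerivation, coeff_zero, mul_eq_zero, sub_eq_zero] at h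
    exact_mod_cast h.resolve_right (mem_support_iff.1 hμ)
  · intro c hca hcb hcs
    have h := coeff_X_mul_pderiv c p μ
    rw [h_pderiv c hca hcb hcs, mul_zero, coeff_zero, eq_comm, mul_eq_zero] at h
    exact_mod_cast h.resolve_right (mem_support_iff.1 hμ)

end MvPolynomial

section Jacobian
variable {k : Type*} [Field k] {m n : ℕ}

theorem jacDet_eq_prod_of_triangular {f : Fin m → MvPolynomial (Fin n) k} {i : Fin m → Fin n}
    (h : ∀ j l, l < j → pderiv (i l) (f j) = 0) : jacDet f i = ∏ j, pderiv (i j) (f j) :=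
  Matrix.det_of_isUpperTriangular fun j l hlj => h j l hlj

theorem dvd_jacDet_of_dvd_pderiv (f : Fin m → MvPolynomial (Fin n) k) (i : Fin m → Fin n)
    {d : MvPolynomial (Fin n) k} (j₀ : Fin m) (h : ∀ c, d ∣ pderiv c (f j₀)) :
    d ∣ jacDet f i := by
  classical
  rw [jacDet, Matrix.det_apply]
  refine Finset.dvd_sum fun τ _ => ?_
  have hτ : d ∣ ∏ l, Matrix.of (fun j l => pderiv (i l) (f j)) (τ l) l := by
    refine dvd_trans ?_ (Finset.dvd_prod_of_mem
      (fun l => Matrix.of (fun j l => pderiv (i l) (f j)) (τ l) l) (Finset.mem_univ (τ.symm j₀)))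
    rw [Matrix.of_apply, Equiv.apply_symm_apply]
    exact h _
  rw [Units.smul_def, zsmul_eq_mul]
  exact hτ.mul_left _

theorem jacDet_castLE_succAbove (hmn : m + 1 < n) {f : Fin (m + 1) → MvPolynomial (Fin n) k}
    (hfs : ∀ j : Fin m, f j.succ = X (Fin.castLE hmn j.succ.succ)) {p : Fin (m + 2)}
    (hp : (p : ℕ) ≤ 1) :
    jacDet f (Fin.castLE hmn ∘ p.succAbove) = pderiv (Fin.castLE hmn (p.succAbove 0)) (f 0) := by
  have hsucc : ∀ j : Fin m, p.succAbove j.succ = j.succ.succ := fun j =>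
    Fin.succAbove_of_le_castSucc _ _ (by rw [Fin.le_iff_val_le_val, Fin.castSucc_succ, Fin.val_succ, Fin.val_castSucc]; omega)
  rw [jacDet_eq_prod_of_triangular, Fin.prod_univ_succ]
  · simp [hfs, hsucc]
  · intro j l hlj
    cases j using Fin.cases with
    | zero => exact absurd hlj (Fin.not_lt_zero l)
    | succ j =>
      rw [hfs]
      refine pderiv_X_of_ne fun h => ?_
      have h' : (j : ℕ) + 2 = p.succAbove l := congrArg Fin.val h
      have hle : (p.succAbove l : ℕ) ≤ l + 1 := by
        unfold Fin.succAbove; split_ifs <;> simp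
      have hlj' : (l : ℕ) < j + 1 := hlj
      omega

theorem IsDgcd.associated {f : Fin m → MvPolynomial (Fin n) k} {d d' : MvPolynomial (Fin n) k}
    (hd : IsDgcd f d) (hd' : IsDgcd f d') : Associated d d' :=
  associated_of_dvd_dvd (hd'.2 d hd.1) (hd.2 d' hd'.1)

theorem isDgcd_X_zero_of_eq [CharZero k] (hmn : m + 1 < n)
    {f : Fin (m + 1) → MvPolynomial (Fin n) k} (hf0 : f 0 = X ⟨0, by omega⟩ ^ 2 * X ⟨1, by omega⟩)
    (hfs : ∀ j : Fin m, f j.succ = X (Fin.castLE hmn j.succ.succ)) :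
    IsDgcd f (X ⟨0, by omega⟩) := by
  have hx : (⟨0, by omega⟩ : Fin n) ≠ ⟨1, by omega⟩ := by simp
  refine ⟨fun i _ => dvd_jacDet_of_dvd_pderiv f i 0 fun c =>
    (pderiv c).dvd_apply_of_sq_dvd (hf0 ▸ dvd_mul_right _ _), fun e he => ?_⟩
  have h₀ := he _ ((Fin.strictMono_castLE hmn).comp (Fin.strictMono_succAbove 0))
  have h₁ := he _ ((Fin.strictMono_castLE hmn).comp (Fin.strictMono_succAbove 1))
  rw [jacDet_castLE_succAbove hmn hfs (by simp), hf0,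
    show Fin.castLE hmn ((0 : Fin (m + 2)).succAbove 0) = ⟨1, by omega⟩ from Fin.ext (by simp),
    pderiv_X_sq_mul_X_right hx] at h₀
  rw [jacDet_castLE_succAbove hmn hfs (by simp), hf0,
    show Fin.castLE hmn ((1 : Fin (m + 2)).succAbove 0) = ⟨0, by omega⟩ from Fin.ext (by simp),
    pderiv_X_sq_mul_X_left hx] at h₁
  have h2 : IsUnit (2 : MvPolynomial (Fin n) k) := by
    rw [← map_ofNat C 2]
    exact (isUnit_iff_ne_zero.2 two_ne_zero).map C
  refine dvd_of_dvd_sq_of_dvd_mul X_prime ?_ h₀ h₁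
  rw [h2.dvd_mul_left, X_dvd_X]
  exact hx

end Jacobian

/-- Remark 1: for `1 ≤ m < n` (so `n ≥ 2`), the polynomials `f₁ = x₁²x₂`,
`f₂ = x₃`, …, `f_m = x_{m+1}` have `dgcd(f₁,…,f_m)` associated to `x₁`
(indeed `x₁` itself is a dgcd, and no constant is), yet `k[f₁,…,f_m]` is
algebraically closed in `k[x₁,…,xₙ]`. -/
theorem statement11 {k : Type*} [Field k] [CharZero k] {m n : ℕ}
    (hm : 1 ≤ m) (hmn : m < n)
    (f : Fin m → MvPolynomial (Fin n) k)
    (hf : f = fun j : Fin m => if (j : ℕ) = 0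
      then X (⟨0, by omega⟩ : Fin n) ^ 2 * X (⟨1, by omega⟩ : Fin n)
      else X (Fin.castLE hmn j.succ)) :
    IsDgcd f (X (⟨0, by omega⟩ : Fin n)) ∧
    (∀ c : k, ¬ IsDgcd f (C c)) ∧
    AlgClosedIn (Algebra.adjoin k (Set.range f)) := by
  obtain ⟨m, rfl⟩ : ∃ m', m = m' + 1 := ⟨m - 1, by omega⟩
  have hf0 : f 0 = X ⟨0, by omega⟩ ^ 2 * X ⟨1, by omega⟩ := by simp [hf]
  have hfs : ∀ j : Fin m, f j.succ = X (Fin.castLE hmn j.succ.succ) := by simp [hf]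
  have hdgcd := isDgcd_X_zero_of_eq hmn hf0 hfs
  refine ⟨hdgcd, fun c hc => not_associated_C_X c _ (hc.associated hdgcd), ?_⟩
  rw [Fin.range_fin_succ, hf0,
    show Fin.tail f = X ∘ Fin.castLE hmn ∘ Fin.succ ∘ Fin.succ from funext hfs, Set.range_comp]
  refine algClosedIn_adjoin_X_sq_mul_X (by simp) ?_ ?_ <;>
  · rintro ⟨j, hj⟩
    simp [Fin.ext_iff] at hj
end

section
/- Let A be a unique factorization domain and let R be a subring of A such that the invertible elements of R coincide with the invertible elements of A (equivalently, every unit of A lies in R and is a unit of R, and every non-unit of R is a non-unit of A). If every irreducible element of R is irreducible in A, then every square-free element of R is square-free in A. -/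
/-!
Since `R` reflects units, it inherits the ascending chain condition on principal ideals from `A`,
so every nonzero element of `R` is a product of irreducibles of `R`, which are primes of `A`.
A prime `p` of `A` with `p * p ∣ r` is then associated in `A` to two factors `t`, `t'` of the
factorisation of `r`; the unit relating them lies in `R`, so `t * t ∣ r` in `R`.
-/

theorem WfDvdMonoid.of_injective {M N F : Type*} [CommMonoidWithZero M] [CommMonoidWithZero N]
    [WfDvdMonoid N] [FunLike F M N] [MonoidWithZeroHomClass F M N] (f : F) [IsLocalHom f]
    (hf : Function.Injective f) : WfDvdMonoid M :=
  ⟨Subrelation.wf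
    (fun {a _} ⟨ha, x, hx, hb⟩ =>
      ⟨(map_ne_zero_iff f hf).mpr ha, f x, mt (isUnit_of_map_unit f x) hx, by rw [hb, map_mul]⟩)
    (InvImage.wf f wellFounded_dvdNotUnit)⟩

namespace Subring

variable {A : Type*} [CommRing A] (R : Subring A)

theorem isLocalHom_subtype_of_forall_isUnit
    (hu : ∀ a : A, IsUnit a → ∃ u : R, IsUnit u ∧ (u : A) = a) : IsLocalHom R.subtype where
  map_nonunit x hx := by
    obtain ⟨u, hu, hux⟩ := hu x hx
    rwa [← Subtype.val_injective hux]

theorem associated_of_associated_coe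
    (hu : ∀ a : A, IsUnit a → ∃ u : R, IsUnit u ∧ (u : A) = a) {s t : R}
    (hst : Associated (s : A) (t : A)) : Associated s t := by
  obtain ⟨w, hw⟩ := hst
  obtain ⟨u, hu, huw⟩ := hu w w.isUnit
  exact ⟨hu.unit, Subtype.val_injective (by simp [huw, hw])⟩

theorem exists_irreducible_dvd_associated_of_prime_dvd_coe [IsDomain A] [WfDvdMonoid R]
    (h : ∀ r : R, Irreducible r → Irreducible (r : A)) {p : A} (hp : Prime p) {r : R}
    (hr : r ≠ 0) (hpr : p ∣ (r : A)) : ∃ t : R, Irreducible t ∧ t ∣ r ∧ Associated p (t : A) := by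
  induction r using WfDvdMonoid.induction_on_irreducible with
  | zero => exact absurd rfl hr
  | unit u hu => exact absurd (isUnit_of_dvd_unit hpr (hu.map R.subtype)) hp.not_isUnit
  | mul a i ha hi ih =>
    rcases hp.dvd_or_dvd (by simpa using hpr) with hpi | hpa
    · exact ⟨i, hi, dvd_mul_right i a, hp.irreducible.associated_of_dvd (h i hi) hpi⟩
    · obtain ⟨t, ht, hta, hpt⟩ := ih ha hpa
      exact ⟨t, ht, hta.mul_left i, hpt⟩

theorem not_prime_mul_self_dvd_coe_of_squarefree [IsDomain A] [WfDvdMonoid R]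
    (hu : ∀ a : A, IsUnit a → ∃ u : R, IsUnit u ∧ (u : A) = a)
    (h : ∀ r : R, Irreducible r → Irreducible (r : A)) {r : R} (hr : Squarefree r)
    {p : A} (hp : Prime p) : ¬ p * p ∣ (r : A) := by
  intro hppr
  have hr0 : r ≠ 0 := hr.ne_zero
  obtain ⟨t, ht, ⟨r', rfl⟩, hpt⟩ :=
    exists_irreducible_dvd_associated_of_prime_dvd_coe R h hp hr0 ((dvd_mul_right p p).trans hppr)
  -- cancelling `t ~ p` once from `p * p ∣ t * r'` leaves `p ∣ r'`
  have hpr' : p ∣ (r' : A) := by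
    obtain ⟨w, hw⟩ := hpt
    rw [coe_mul, ← hw, mul_assoc] at hppr
    exact Units.dvd_mul_left.mp ((mul_dvd_mul_iff_left hp.ne_zero).mp hppr)
  obtain ⟨t', -, ht'r', hpt'⟩ := exists_irreducible_dvd_associated_of_prime_dvd_coe R h hp
    (right_ne_zero_of_mul hr0) hpr'
  obtain ⟨w, hw⟩ := associated_of_associated_coe R hu (hpt.symm.trans hpt')
  have htt' : t * t ∣ t * t' := mul_dvd_mul_left t ⟨w, hw.symm⟩
  exact ht.not_isUnit (hr t (htt'.trans (mul_dvd_mul_left t ht'r')))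

end Subring

/-- Lemma 3, (i) ⇒ (ii): if `A` is a UFD and `R` is a subring of `A` whose
invertible elements are exactly the invertible elements of `A`, and every
irreducible element of `R` is irreducible in `A`, then every square-free
element of `R` is square-free in `A`. -/
theorem statement12 {A : Type*} [CommRing A] [IsDomain A] [UniqueFactorizationMonoid A]
    (R : Subring A)
    (hu : ∀ a : A, IsUnit a ↔ ∃ u : R, IsUnit u ∧ (u : A) = a)
    (h : ∀ r : R, Irreducible r → Irreducible (r : A)) :
    ∀ r : R, Squarefree r → Squarefree (r : A) := by
  intro r hr
  have hu' a := (hu a).mp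
  have := R.isLocalHom_subtype_of_forall_isUnit hu'
  have := WfDvdMonoid.of_injective R.subtype Subtype.val_injective
  rw [squarefree_iff_no_irreducibles (by exact_mod_cast hr.ne_zero)]
  exact fun p hp => R.not_prime_mul_self_dvd_coe_of_squarefree hu' h hr hp.prime
end

section
/- Let A be a unique factorization domain and let R be a subring of A such that the invertible elements of R coincide with the invertible elements of A (equivalently, every unit of A lies in R and is a unit of R, and every non-unit of R is a non-unit of A). Then every irreducible element of R is irreducible in A if and only if R is factorially closed in A. -/
/-! If irreducibles of `R` stay irreducible in `A`, then every divisor in `A` of a nonzero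
`r ∈ R` lies in `R`, by well-founded induction on strict divisibility: units and irreducibles
of `R` only have unit or associate divisors, which lie in `R` since `R` contains the units of
`A`; otherwise `r = s * t` with `s`, `t` non-units of `R`, hence strict divisors of `r` in `A`,
and in a UFD every divisor of `s * t` is a product of a divisor of `s` and one of `t`. -/

namespace Subring

variable {A : Type*} [CommRing A] (R : Subring A)

theorem mem_of_dvd_of_mem [WfDvdMonoid A] [DecompositionMonoid A]
    (units_mem : ∀ a : A, IsUnit a → a ∈ R)
    (isUnit_of_isUnit_coe : ∀ r : R, IsUnit (r : A) → IsUnit r)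
    (irreducible_coe : ∀ r : R, Irreducible r → Irreducible (r : A))
    {a d : A} (ha : a ∈ R) (ha0 : a ≠ 0) (hd : d ∣ a) : d ∈ R := by
  induction a using (wellFounded_dvdNotUnit (α := A)).induction generalizing d with
  | h a ih =>
  by_cases hunit : IsUnit a
  · exact units_mem d (isUnit_of_dvd_unit hd hunit)
  by_cases hirr : Irreducible (⟨a, ha⟩ : R)
  · obtain ⟨e, rfl⟩ := hd
    rcases (irreducible_coe _ hirr).isUnit_or_isUnit rfl with hd | he
    · exact units_mem d hd
    · have := R.mul_mem ha (units_mem _ he.unit⁻¹.isUnit)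
      rwa [mul_assoc, he.mul_val_inv, mul_one] at this
  have hnu : ¬IsUnit (⟨a, ha⟩ : R) := fun h => hunit (h.map R.subtype)
  simp only [irreducible_iff, not_and, not_forall, not_or] at hirr
  obtain ⟨s, t, hst, hs, ht⟩ := hirr hnu
  replace hst : a = s * t := congrArg Subtype.val hst
  have hs0 : (s : A) ≠ 0 := left_ne_zero_of_mul (hst ▸ ha0)
  have ht0 : (t : A) ≠ 0 := right_ne_zero_of_mul (hst ▸ ha0)
  have hs_lt : DvdNotUnit (s : A) a :=
    ⟨hs0, t, mt (isUnit_of_isUnit_coe t) ht, hst⟩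
  have ht_lt : DvdNotUnit (t : A) a :=
    ⟨ht0, s, mt (isUnit_of_isUnit_coe s) hs, hst.trans (mul_comm _ _)⟩
  obtain ⟨d₁, d₂, hd₁, hd₂, rfl⟩ := exists_dvd_and_dvd_of_dvd_mul (hst ▸ hd)
  exact R.mul_mem (ih s hs_lt s.2 hs0 hd₁) (ih t ht_lt t.2 ht0 hd₂)

theorem irreducible_coe_of_factorially_closed
    (isUnit_of_isUnit_coe : ∀ r : R, IsUnit (r : A) → IsUnit r)
    (factorially_closed : ∀ x y : A, x * y ∈ R → x * y ≠ 0 → x ∈ R ∧ y ∈ R)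
    {r : R} (hr : Irreducible r) : Irreducible (r : A) := by
  refine ⟨mt (isUnit_of_isUnit_coe r) hr.not_isUnit, fun a b hab => ?_⟩
  have hr0 : (r : A) ≠ 0 := fun h => hr.ne_zero (Subtype.ext h)
  obtain ⟨ha, hb⟩ := factorially_closed a b (hab ▸ r.2) (hab ▸ hr0)
  exact (hr.isUnit_or_isUnit (a := ⟨a, ha⟩) (b := ⟨b, hb⟩) (Subtype.ext hab)).imp
    (·.map R.subtype) (·.map R.subtype)

end Subring

/-- Lemma 4: if `A` is a UFD and `R` is a subring of `A` whose invertible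
elements are exactly the invertible elements of `A`, then every irreducible
element of `R` is irreducible in `A` iff `R` is factorially closed in `A`
(i.e. `xy ∈ R ∖ {0}` implies `x, y ∈ R`). -/
theorem statement14 {A : Type*} [CommRing A] [IsDomain A] [UniqueFactorizationMonoid A]
    (R : Subring A)
    (hu : ∀ a : A, IsUnit a ↔ ∃ u : R, IsUnit u ∧ (u : A) = a) :
    (∀ r : R, Irreducible r → Irreducible (r : A)) ↔
    (∀ x y : A, x * y ∈ R → x * y ≠ 0 → x ∈ R ∧ y ∈ R) := by
  have units_mem : ∀ a : A, IsUnit a → a ∈ R := fun a ha => by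
    obtain ⟨u, -, rfl⟩ := (hu a).1 ha
    exact u.2
  have isUnit_of_isUnit_coe : ∀ r : R, IsUnit (r : A) → IsUnit r := fun r hr => by
    obtain ⟨u, hu_unit, hur⟩ := (hu r).1 hr
    rwa [Subtype.ext hur] at hu_unit
  refine ⟨fun hirr x y hxy hxy0 => ⟨?_, ?_⟩,
    fun hfc _ => R.irreducible_coe_of_factorially_closed isUnit_of_isUnit_coe hfc⟩
  · exact R.mem_of_dvd_of_mem units_mem isUnit_of_isUnit_coe hirr hxy hxy0 (dvd_mul_right x y)
  · exact R.mem_of_dvd_of_mem units_mem isUnit_of_isUnit_coe hirr hxy hxy0 (dvd_mul_left y x)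
end

section
/- Let A be a unique factorization domain and let R be a subring of A such that the invertible elements of R coincide with the invertible elements of A (equivalently, every unit of A lies in R and is a unit of R, and every non-unit of R is a non-unit of A) and such that R_0 ∩ A = R. If R is square-factorially closed in A, then R is root closed in A, i.e., for every x ∈ A and every integer n ≥ 1, x^n ∈ R implies x ∈ R. -/
/-!
Square-factorial closedness extracts square roots: from `x ^ (2 * m) = (x ^ m) ^ 2 * 1 ∈ R`
we get `x ^ m ∈ R`, so it suffices to treat odd exponents `n = 2 * q + 1`. Writing
`x = a ^ 2 * b` with `b` squarefree gives `x ^ n = (a ^ n * b ^ q) ^ 2 * b`, hence `b ∈ R` and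
`a ^ n * b ^ q ∈ R`; since `R₀ ∩ A = R` this yields `a ^ n ∈ R`. Now `a` is either a unit, hence
in `R`, or a proper divisor of `x`, and well-founded induction on divisibility gives `a ∈ R`,
so `x = a ^ 2 * b ∈ R`.
-/

theorem exists_eq_sq_mul_squarefree {α : Type*} [CommMonoidWithZero α] [WfDvdMonoid α]
    {x : α} (hx : x ≠ 0) : ∃ a b : α, x = a ^ 2 * b ∧ Squarefree b := by
  induction x using IsWellFounded.induction (DvdNotUnit (α := α)) with
  | ind x ih =>
  by_cases hsq : Squarefree x
  · exact ⟨1, x, by rw [one_pow, one_mul], hsq⟩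
  obtain ⟨c, ⟨d, rfl⟩, hc⟩ : ∃ c, c * c ∣ x ∧ ¬IsUnit c := by
    simpa [Squarefree] using hsq
  have hd : d ≠ 0 := right_ne_zero_of_mul hx
  have hcc : ¬IsUnit (c * c) := fun h => hc (isUnit_of_mul_isUnit_left h)
  obtain ⟨a, b, rfl, hb⟩ := ih d ⟨hd, c * c, hcc, mul_comm _ _⟩ hd
  exact ⟨c * a, b, by rw [mul_pow, ← sq, mul_assoc], hb⟩

namespace Subring

variable {A : Type*} [CommRing A]

def IsSquareFactoriallyClosed (R : Subring A) : Prop :=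
  ∀ x y : A, Squarefree y → x ^ 2 * y ∈ R → x ^ 2 * y ≠ 0 → x ∈ R ∧ y ∈ R

variable [IsDomain A] {R : Subring A}

theorem IsSquareFactoriallyClosed.pow_mem_of_pow_two_mul_mem
    (hR : R.IsSquareFactoriallyClosed) {x : A} {m : ℕ} (h : x ^ (2 * m) ∈ R) : x ^ m ∈ R := by
  by_cases hx : x ^ m = 0
  · rw [hx]; exact R.zero_mem
  refine (hR (x ^ m) 1 squarefree_one ?_ ?_).1
  · rwa [mul_one, ← pow_mul, mul_comm]
  · simpa using hx

theorem IsSquareFactoriallyClosed.exists_odd_pow_mem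
    (hR : R.IsSquareFactoriallyClosed) {x : A} {n : ℕ} (hn : n ≠ 0) (h : x ^ n ∈ R) :
    ∃ m, Odd m ∧ x ^ m ∈ R := by
  obtain ⟨k, m, hm, rfl⟩ := Nat.exists_eq_two_pow_mul_odd hn
  refine ⟨m, hm, ?_⟩
  clear hn
  induction k with
  | zero => simpa using h
  | succ k ih => exact ih (hR.pow_mem_of_pow_two_mul_mem (by rwa [pow_succ', mul_assoc] at h))

theorem IsSquareFactoriallyClosed.mem_of_odd_pow_mem [UniqueFactorizationMonoid A]
    (hR : R.IsSquareFactoriallyClosed) (hunit : ∀ a : A, IsUnit a → a ∈ R)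
    (hdiv : ∀ a s : A, s ∈ R → s ≠ 0 → a * s ∈ R → a ∈ R)
    {n : ℕ} (hn : Odd n) {x : A} (h : x ^ n ∈ R) : x ∈ R := by
  induction x using IsWellFounded.induction (DvdNotUnit (α := A)) with
  | ind x ih =>
  by_cases hx : x = 0
  · rw [hx]; exact R.zero_mem
  obtain ⟨a, b, rfl, hb⟩ := exists_eq_sq_mul_squarefree hx
  obtain ⟨q, rfl⟩ := hn
  have ha : a ≠ 0 := pow_ne_zero_iff two_ne_zero |>.mp (left_ne_zero_of_mul hx)
  have hb0 : b ≠ 0 := right_ne_zero_of_mul hx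
  have hsplit : (a ^ 2 * b) ^ (2 * q + 1) = (a ^ (2 * q + 1) * b ^ q) ^ 2 * b := by ring
  rw [hsplit] at h
  obtain ⟨hab, hbR⟩ := hR _ _ hb h (hsplit ▸ pow_ne_zero _ hx)
  have hpow : a ^ (2 * q + 1) ∈ R := hdiv _ _ (pow_mem hbR q) (pow_ne_zero _ hb0) hab
  have haR : a ∈ R := by
    by_cases hau : IsUnit a
    · exact hunit a hau
    · exact ih a ⟨ha, a * b, fun h => hau (isUnit_of_mul_isUnit_left h),
      (by ring : a ^ 2 * b = a * (a * b))⟩ hpow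
  exact R.mul_mem (pow_mem haR 2) hbR

end Subring

/-- Theorem 4: let `A` be a UFD and `R` a subring of `A` whose invertible
elements are exactly the invertible elements of `A` and with `R₀ ∩ A = R`.
If `R` is square-factorially closed in `A` (for every `x ∈ A` and square-free
`y ∈ A`, `x²y ∈ R ∖ {0}` implies `x, y ∈ R`), then `R` is root closed in `A`
(for every `x ∈ A` and `n ≥ 1`, `xⁿ ∈ R` implies `x ∈ R`). -/
theorem statement17 {A : Type*} [CommRing A] [IsDomain A] [UniqueFactorizationMonoid A]
    (R : Subring A)
    (hu : ∀ a : A, IsUnit a ↔ ∃ u : R, IsUnit u ∧ (u : A) = a)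
    (hfr : ∀ a : A, (∃ r s : R, (s : A) ≠ 0 ∧ a * (s : A) = (r : A)) → a ∈ R)
    (hsfc : ∀ x y : A, Squarefree y → x ^ 2 * y ∈ R → x ^ 2 * y ≠ 0 → x ∈ R ∧ y ∈ R) :
    ∀ (x : A) (n : ℕ), 1 ≤ n → x ^ n ∈ R → x ∈ R := by
  intro x n hn hxn
  have hR : R.IsSquareFactoriallyClosed := hsfc
  have hunit : ∀ a : A, IsUnit a → a ∈ R := fun a ha => by
    obtain ⟨u, -, rfl⟩ := (hu a).mp ha
    exact u.2
  have hdiv : ∀ a s : A, s ∈ R → s ≠ 0 → a * s ∈ R → a ∈ R := fun a s hs hs0 has =>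
    hfr a ⟨⟨_, has⟩, ⟨s, hs⟩, hs0, rfl⟩
  obtain ⟨m, hm, hxm⟩ := hR.exists_odd_pow_mem (Nat.one_le_iff_ne_zero.mp hn) hxn
  exact hR.mem_of_odd_pow_mem hunit hdiv hm hxm
end
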